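/- arXiv:1707.04071 — 6 statements merged into one kernel-verified Lean document; each statement's English description precedes it below -/
import Mathlib

section
/- Let V ⊆ ℝ² be a finite set and let P = conv(V) be its convex hull. Then there exist A, B, C ∈ V such that for all X, Y, Z ∈ P, the area of triangle XYZ is at most the area of triangle ABC. In other words, a maximum-area triangle inscribed in a convex polygon can be chosen with its corners at vertices of the polygon. -/
noncomputable section

abbrev Pt := EuclideanSpace ℝ (Fin 2)

def det2 (u v : Pt) : ℝ := u 0 * v 1 - u 1 * v 0

def triArea (A B C : Pt) : ℝ := (1/2) * |det2 (B - A) (C - A)|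

def lineThrough (B C : Pt) : Set Pt := (affineSpan ℝ {B, C} : Set Pt)

def distLine (X B C : Pt) : ℝ := Metric.infDist X (lineThrough B C)

lemma triArea_swap12 (X Y Z : Pt) : triArea X Y Z = triArea Y X Z := by
  simp only [triArea, det2, PiLp.sub_apply]
  rw [← abs_neg]
  congr 1
  ring

lemma triArea_rot (X Y Z : Pt) : triArea X Y Z = triArea Y Z X := by
  simp only [triArea, det2, PiLp.sub_apply]
  congr 1
  ring

lemma convexOn_triArea (Y Z : Pt) :
    ConvexOn ℝ Set.univ (fun X => triArea X Y Z) := by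
  refine ⟨convex_univ, ?_⟩
  intro x _ y _ a b ha hb hab
  simp only [triArea, det2, PiLp.sub_apply, PiLp.smul_apply, PiLp.add_apply,
    smul_eq_mul]
  have key : (Y 0 - (a * x 0 + b * y 0)) * (Z 1 - (a * x 1 + b * y 1)) -
      (Y 1 - (a * x 1 + b * y 1)) * (Z 0 - (a * x 0 + b * y 0)) =
      a * ((Y 0 - x 0) * (Z 1 - x 1) - (Y 1 - x 1) * (Z 0 - x 0)) +
      b * ((Y 0 - y 0) * (Z 1 - y 1) - (Y 1 - y 1) * (Z 0 - y 0)) := by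
    have : b = 1 - a := by linarith
    subst this; ring
  rw [key]
  calc (1/2) * |a * _ + b * _| ≤ (1/2) * (|a * _| + |b * _|) := by
        gcongr; exact abs_add_le _ _
    _ = a * ((1/2) * |_|) + b * ((1/2) * |_|) := by
        rw [abs_mul, abs_mul, abs_of_nonneg ha, abs_of_nonneg hb]; ring

lemma step (V : Set Pt) (Y Z : Pt) {X : Pt} (hX : X ∈ convexHull ℝ V) :
    ∃ A ∈ V, triArea X Y Z ≤ triArea A Y Z :=
  ((convexOn_triArea Y Z).subset (Set.subset_univ _)
    (convex_convexHull ℝ V)).exists_ge_of_mem_convexHull (subset_convexHull ℝ V) hX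

theorem stmt_4 (V : Set Pt) (hV : V.Finite) (hne : V.Nonempty) (P : Set Pt)
    (hP : P = convexHull ℝ V) :
    ∃ A ∈ V, ∃ B ∈ V, ∃ C ∈ V,
      ∀ X ∈ P, ∀ Y ∈ P, ∀ Z ∈ P, triArea X Y Z ≤ triArea A B C := by
  have hT : (V ×ˢ V ×ˢ V).Finite := hV.prod (hV.prod hV)
  have hTne : (V ×ˢ V ×ˢ V).Nonempty := hne.prod (hne.prod hne)
  obtain ⟨⟨A, B, C⟩, hmem, hmax⟩ :=
    hT.exists_maximalFor (fun p => triArea p.1 p.2.1 p.2.2) _ hTne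
  obtain ⟨hA, hB, hC⟩ := hmem
  have hmax' : ∀ a ∈ V, ∀ b ∈ V, ∀ c ∈ V, triArea a b c ≤ triArea A B C := by
    intro a ha b hb c hc
    by_contra h
    push_neg at h
    have := hmax (show (a, b, c) ∈ V ×ˢ V ×ˢ V from ⟨ha, hb, hc⟩) (le_of_lt h)
    exact absurd this (not_le.mpr h)
  refine ⟨A, hA, B, hB, C, hC, ?_⟩
  subst hP
  intro X hX Y hY Z hZ
  obtain ⟨a, ha, h1⟩ := step V Y Z hX
  obtain ⟨b, hb, h2⟩ := step V Z a hY
  obtain ⟨c, hc, h3⟩ := step V a b hZ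
  calc triArea X Y Z ≤ triArea a Y Z := h1
    _ = triArea Y Z a := triArea_rot _ _ _
    _ ≤ triArea b Z a := h2
    _ = triArea Z a b := triArea_rot _ _ _
    _ ≤ triArea c a b := h3
    _ = triArea a b c := triArea_rot _ _ _
    _ ≤ triArea A B C := hmax' a ha b hb c hc
end
end

section
/- Let I₁, I₂, I₃ be three affinely independent points in the plane. Suppose A lies on the line through I₁ and I₃, B lies on the line through I₁ and I₂, and C lies on the line through I₂ and I₃, and suppose that B − A is parallel to I₃ − I₂, C − B is parallel to I₁ − I₃, and A − C is parallel to I₂ − I₁, with A, B, C pairwise distinct. Then A is the midpoint of I₁ and I₃, B is the midpoint of I₁ and I₂, and C is the midpoint of I₂ and I₃. -/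
noncomputable section

lemma indep_aux (I₁ I₂ I₃ : Pt)
    (hind : ¬ Collinear ℝ ({I₁, I₂, I₃} : Set Pt)) (α β : ℝ)
    (h : α • (I₂ - I₁) + β • (I₃ - I₁) = 0) : α = 0 ∧ β = 0 := by
  by_cases hβ : β = 0
  · refine ⟨?_, hβ⟩
    subst hβ
    simp only [zero_smul, add_zero] at h
    by_contra hα
    have h2 : I₂ = I₁ := by
      rcases smul_eq_zero.1 h with h' | h'
      · exact absurd h' hα
      · exact sub_eq_zero.1 h'
    apply hind
    rw [h2]
    have : ({I₁, I₁, I₃} : Set Pt) = {I₁, I₃} := by simp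
    rw [this]
    exact collinear_pair ℝ I₁ I₃
  · exfalso
    apply hind
    rw [collinear_iff_of_mem (show I₁ ∈ ({I₁, I₂, I₃} : Set Pt) by simp)]
    refine ⟨I₂ - I₁, ?_⟩
    intro p hp
    have hv : I₃ - I₁ = (β⁻¹ * -α) • (I₂ - I₁) := by
      have h' : β • (I₃ - I₁) = (-α) • (I₂ - I₁) := by
        linear_combination (norm := module) h
      calc I₃ - I₁ = β⁻¹ • (β • (I₃ - I₁)) := (inv_smul_smul₀ hβ _).symm
        _ = β⁻¹ • ((-α) • (I₂ - I₁)) := by rw [h']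
        _ = (β⁻¹ * -α) • (I₂ - I₁) := smul_smul _ _ _
    rcases hp with h' | h' | h'
    · exact ⟨0, by simp [h']⟩
    · exact ⟨1, by simp [h', vadd_eq_add]⟩
    · refine ⟨β⁻¹ * -α, ?_⟩
      rw [h', ← hv, vadd_eq_add]
      abel

theorem stmt_6 (I₁ I₂ I₃ A B C : Pt)
    (hind : ¬ Collinear ℝ ({I₁, I₂, I₃} : Set Pt))
    (hA : A ∈ lineThrough I₁ I₃) (hB : B ∈ lineThrough I₁ I₂)
    (hC : C ∈ lineThrough I₂ I₃)
    (h1 : ∃ s : ℝ, s ≠ 0 ∧ B - A = s • (I₃ - I₂))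
    (h2 : ∃ s : ℝ, s ≠ 0 ∧ C - B = s • (I₁ - I₃))
    (h3 : ∃ s : ℝ, s ≠ 0 ∧ A - C = s • (I₂ - I₁))
    (hAB : A ≠ B) (hBC : B ≠ C) (hCA : C ≠ A) :
    A = midpoint ℝ I₁ I₃ ∧ B = midpoint ℝ I₁ I₂ ∧ C = midpoint ℝ I₂ I₃ := by
  simp only [lineThrough, SetLike.mem_coe] at hA hB hC
  have hA' : (A -ᵥ I₁) +ᵥ I₁ ∈ line[ℝ, I₁, I₃] := by rwa [vsub_vadd]
  have hB' : (B -ᵥ I₁) +ᵥ I₁ ∈ line[ℝ, I₁, I₂] := by rwa [vsub_vadd]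
  have hC' : (C -ᵥ I₂) +ᵥ I₂ ∈ line[ℝ, I₂, I₃] := by rwa [vsub_vadd]
  obtain ⟨a, ha⟩ := vadd_left_mem_affineSpan_pair.1 hA'
  obtain ⟨b, hb⟩ := vadd_left_mem_affineSpan_pair.1 hB'
  obtain ⟨c, hc⟩ := vadd_left_mem_affineSpan_pair.1 hC'
  simp only [vsub_eq_sub] at ha hb hc
  have ha' : A = a • (I₃ - I₁) + I₁ := by rw [ha]; abel
  have hb' : B = b • (I₂ - I₁) + I₁ := by rw [hb]; abel
  have hc' : C = c • (I₃ - I₂) + I₂ := by rw [hc]; abel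
  subst ha' hb' hc'
  obtain ⟨s, hs0, hs⟩ := h1
  obtain ⟨t, ht0, ht⟩ := h2
  obtain ⟨r, hr0, hr⟩ := h3
  have e1 : (b + s) • (I₂ - I₁) + (-a - s) • (I₃ - I₁) = 0 := by
    linear_combination (norm := module) hs
  have e2 : (1 - c - b) • (I₂ - I₁) + (c + t) • (I₃ - I₁) = 0 := by
    linear_combination (norm := module) ht
  have e3 : (c - 1 - r) • (I₂ - I₁) + (a - c) • (I₃ - I₁) = 0 := by
    linear_combination (norm := module) hr
  obtain ⟨f1, f2⟩ := indep_aux I₁ I₂ I₃ hind _ _ e1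
  obtain ⟨f3, f4⟩ := indep_aux I₁ I₂ I₃ hind _ _ e2
  obtain ⟨f5, f6⟩ := indep_aux I₁ I₂ I₃ hind _ _ e3
  have ha2 : a = 1/2 := by linarith
  have hb2 : b = 1/2 := by linarith
  have hc2 : c = 1/2 := by linarith
  subst ha2 hb2 hc2
  refine ⟨?_, ?_, ?_⟩ <;> rw [midpoint_eq_smul_add, invOf_eq_inv] <;> module
end
end

section
/- Let K ⊆ ℝ² be a compact convex set, and let T be a triangle with vertices a, b, c such that K ⊆ T. Let A = (b+c)/2, B = (c+a)/2, C = (a+b)/2 be the midpoints of the sides of T, and assume A, B, C ∈ K and that a, b, c are affinely independent. Then for every X ∈ K, the distance from X to the line through B and C is at most the distance from A to the line through B and C, and similarly for the corners B and C. That is, the contact triangle ABC has all three corners stable with respect to K. -/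
noncomputable section

open Metric AffineIsometryEquiv

lemma line_convex (B C : Pt) : Convex ℝ (lineThrough B C) :=
  (affineSpan ℝ {B, C}).convex

lemma line_closed (B C : Pt) : IsClosed (lineThrough B C) :=
  (affineSpan ℝ {B, C}).closed_of_finiteDimensional

lemma line_nonempty (B C : Pt) : (lineThrough B C).Nonempty :=
  ⟨B, left_mem_affineSpan_pair ℝ B C⟩

lemma infDist_convexOn {s : Set Pt} (hs : Convex ℝ s) (hcl : IsClosed s)
    (hne : s.Nonempty) : ConvexOn ℝ Set.univ (fun x => infDist x s) := by
  refine ⟨convex_univ, fun x _ y _ α β hα hβ hαβ => ?_⟩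
  obtain ⟨p, hp, hxp⟩ := hcl.exists_infDist_eq_dist hne x
  obtain ⟨q, hq, hyq⟩ := hcl.exists_infDist_eq_dist hne y
  have hmem : α • p + β • q ∈ s := hs hp hq hα hβ hαβ
  calc infDist (α • x + β • y) s ≤ dist (α • x + β • y) (α • p + β • q) :=
        infDist_le_dist_of_mem hmem
    _ ≤ α * dist x p + β * dist y q := by
        rw [dist_eq_norm, dist_eq_norm, dist_eq_norm]
        have h : α • x + β • y - (α • p + β • q) = α • (x - p) + β • (y - q) := by
          module
        rw [h]
        calc ‖α • (x - p) + β • (y - q)‖ ≤ ‖α • (x - p)‖ + ‖β • (y - q)‖ :=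
              norm_add_le _ _
          _ = α * ‖x - p‖ + β * ‖y - q‖ := by
              rw [norm_smul, norm_smul, Real.norm_of_nonneg hα, Real.norm_of_nonneg hβ]
    _ = α • infDist x s + β • infDist y s := by
        rw [hxp, hyq]; simp [smul_eq_mul]

lemma distLine_map (f : Pt ≃ᵃⁱ[ℝ] Pt) (x B C : Pt) :
    distLine (f x) (f B) (f C) = distLine x B C := by
  unfold distLine lineThrough
  have h := AffineSubspace.map_span (f.toAffineIsometry.toAffineMap) ({B, C} : Set Pt)
  have h2 : (f.toAffineIsometry.toAffineMap) '' ({B, C} : Set Pt) = {f B, f C} := by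
    rw [Set.image_insert_eq, Set.image_singleton]; rfl
  rw [h2] at h
  have himg : ⇑f '' (affineSpan ℝ ({B, C} : Set Pt) : Set Pt) =
      (affineSpan ℝ ({f B, f C} : Set Pt) : Set Pt) := by
    calc (⇑f '' (affineSpan ℝ {B, C} : Set Pt))
        = (f.toAffineIsometry.toAffineMap) '' (affineSpan ℝ {B, C} : Set Pt) := rfl
      _ = ((affineSpan ℝ ({B, C} : Set Pt)).map f.toAffineIsometry.toAffineMap : Set Pt) := by
          rw [AffineSubspace.coe_map]
      _ = (affineSpan ℝ ({f B, f C} : Set Pt) : Set Pt) := by rw [h]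
  rw [← himg, Metric.infDist_image f.isometry]

lemma lineThrough_comm (B C : Pt) : lineThrough B C = lineThrough C B := by
  unfold lineThrough; rw [Set.pair_comm]

lemma lineThrough_reflect (B C : Pt) :
    lineThrough (pointReflection ℝ C B) C = lineThrough B C := by
  have hD : pointReflection ℝ C B = (2 : ℝ) • (C -ᵥ B) +ᵥ B := by
    rw [pointReflection_apply]
    simp only [vsub_eq_sub, vadd_eq_add]
    module
  unfold lineThrough
  apply congrArg
  apply le_antisymm
  · rw [affineSpan_le]
    refine Set.insert_subset ?_ (Set.singleton_subset_iff.mpr ?_)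
    · rw [hD]
      exact smul_vsub_vadd_mem_affineSpan_pair (2 : ℝ) B C
    · exact right_mem_affineSpan_pair ℝ B C
  · rw [affineSpan_le]
    refine Set.insert_subset ?_ (Set.singleton_subset_iff.mpr ?_)
    · have hB : (2 : ℝ) • (C -ᵥ pointReflection ℝ C B) +ᵥ pointReflection ℝ C B = B := by
        rw [hD]; simp only [vsub_eq_sub, vadd_eq_add]; module
      exact Set.mem_of_eq_of_mem hB.symm
        (smul_vsub_vadd_mem_affineSpan_pair (2 : ℝ) (pointReflection ℝ C B) C)
    · exact right_mem_affineSpan_pair ℝ _ C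

lemma corner (a b c B C : Pt) (hB : B = midpoint ℝ c a) (hC : C = midpoint ℝ a b)
    (X : Pt) (hX : X ∈ convexHull ℝ ({a, b, c} : Set Pt)) :
    distLine X B C ≤ distLine (midpoint ℝ b c) B C := by
  set A := midpoint ℝ b c with hA
  -- distance of b to line BC equals that of a
  have hb : distLine b B C = distLine a B C := by
    have := distLine_map (pointReflection ℝ C) b B C
    rw [pointReflection_self] at this
    have hfb : pointReflection ℝ C b = a := by
      rw [hC]; exact pointReflection_midpoint_right a b
    rw [hfb] at this
    rw [← this]
    unfold distLine
    rw [lineThrough_reflect]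
  have hc : distLine c B C = distLine a B C := by
    have := distLine_map (pointReflection ℝ B) c B C
    rw [pointReflection_self] at this
    have hfc : pointReflection ℝ B c = a := by
      rw [hB]; exact pointReflection_midpoint_left c a
    rw [hfc] at this
    rw [← this]
    unfold distLine
    rw [lineThrough_comm B, lineThrough_reflect C B, lineThrough_comm C B]
  have hAa : distLine A B C = distLine a B C := by
    have hm : midpoint ℝ B C = midpoint ℝ a A := by
      rw [hA, hB, hC]
      simp only [midpoint_eq_smul_add, invOf_eq_inv]
      module
    have := distLine_map (pointReflection ℝ (midpoint ℝ B C)) a B C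
    rw [pointReflection_midpoint_left, pointReflection_midpoint_right] at this
    have hfa : pointReflection ℝ (midpoint ℝ B C) a = A := by
      rw [hm]; exact pointReflection_midpoint_left a A
    rw [hfa] at this
    rw [← this]
    unfold distLine
    rw [lineThrough_comm]
  have hcvx := infDist_convexOn (line_convex B C) (line_closed B C) (line_nonempty B C)
  obtain ⟨y, hy, hle⟩ := hcvx.exists_ge_of_mem_convexHull (Set.subset_univ _) hX
  have hyd : distLine y B C = distLine a B C := by
    rcases hy with rfl | rfl | rfl
    · rfl
    · exact hb
    · exact hc
  calc distLine X B C ≤ distLine y B C := hle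
    _ = distLine a B C := hyd
    _ = distLine A B C := hAa.symm

theorem stmt_10 (K : Set Pt) (hK : IsCompact K) (hconv : Convex ℝ K)
    (a b c : Pt) (hind : ¬ Collinear ℝ ({a, b, c} : Set Pt))
    (hsub : K ⊆ convexHull ℝ ({a, b, c} : Set Pt))
    (A B C : Pt) (hA : A = midpoint ℝ b c) (hB : B = midpoint ℝ c a)
    (hC : C = midpoint ℝ a b)
    (hAK : A ∈ K) (hBK : B ∈ K) (hCK : C ∈ K) :
    ∀ X ∈ K, distLine X B C ≤ distLine A B C ∧
      distLine X C A ≤ distLine B C A ∧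
      distLine X A B ≤ distLine C A B := by
  intro X hX
  have hset1 : ({b, c, a} : Set Pt) = {a, b, c} := by
    ext x; simp only [Set.mem_insert_iff, Set.mem_singleton_iff]; tauto
  have hset2 : ({c, a, b} : Set Pt) = {a, b, c} := by
    ext x; simp only [Set.mem_insert_iff, Set.mem_singleton_iff]; tauto
  refine ⟨?_, ?_, ?_⟩
  · have := corner a b c B C hB hC X (hsub hX)
    rwa [← hA] at this
  · have := corner b c a C A hC hA X (by rw [hset1]; exact hsub hX)
    rwa [← hB] at this
  · have := corner c a b A B hA hB X (by rw [hset2]; exact hsub hX)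
    rwa [← hC] at this

end
end

section
/- Let K ⊆ ℝ² be a compact convex set with nonempty interior, and let T = conv{a, b, c} be a triangle of minimal area among all triangles containing K (with a, b, c affinely independent). Then each side of T intersects K; that is, the segment [a, b] ∩ K, the segment [b, c] ∩ K, and the segment [c, a] ∩ K are all nonempty. -/
noncomputable section

lemma triArea_cyc (a b c : Pt) : triArea b c a = triArea a b c := by
  unfold triArea
  congr 1
  have : det2 (c - b) (a - b) = det2 (b - a) (c - a) := by
    simp [det2, PiLp.sub_apply]; ring
  rw [this]

lemma set_cyc (a b c : Pt) : ({b, c, a} : Set Pt) = ({a, b, c} : Set Pt) := by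
  ext x; simp; tauto

lemma collinear_of_det (a b c : Pt)
    (h : (b 0 - a 0) * (c 1 - a 1) - (b 1 - a 1) * (c 0 - a 0) = 0) :
    Collinear ℝ ({a, b, c} : Set Pt) := by
  rw [collinear_iff_of_mem (Set.mem_insert a _)]
  by_cases hba : b = a
  · refine ⟨c - a, ?_⟩
    rintro p (rfl | rfl | rfl)
    · exact ⟨0, by simp⟩
    · exact ⟨0, by simp [hba]⟩
    · exact ⟨1, by simp⟩
  · refine ⟨b - a, ?_⟩
    have hne : b 0 - a 0 ≠ 0 ∨ b 1 - a 1 ≠ 0 := by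
      by_contra hcon
      push_neg at hcon
      apply hba
      ext i
      fin_cases i
      · show b 0 = a 0; linarith [hcon.1]
      · show b 1 = a 1; linarith [hcon.2]
    have key : ∃ r : ℝ, c = r • (b - a) +ᵥ a := by
      rcases hne with h0 | h0
      · refine ⟨(c 0 - a 0) / (b 0 - a 0), ?_⟩
        ext i
        fin_cases i <;>
          simp only [PiLp.add_apply, PiLp.smul_apply, PiLp.sub_apply, smul_eq_mul, vadd_eq_add, Fin.zero_eta, Fin.mk_one]
        · field_simp; ring
        · field_simp; nlinarith [h]
      · refine ⟨(c 1 - a 1) / (b 1 - a 1), ?_⟩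
        ext i
        fin_cases i <;>
          simp only [PiLp.add_apply, PiLp.smul_apply, PiLp.sub_apply, smul_eq_mul, vadd_eq_add, Fin.zero_eta, Fin.mk_one]
        · field_simp; nlinarith [h]
        · field_simp; ring
    rintro p (rfl | rfl | rfl)
    · exact ⟨0, by simp⟩
    · exact ⟨1, by ext i; simp⟩
    · exact key

lemma mem_tri {a b c x : Pt} :
    x ∈ convexHull ℝ ({a, b, c} : Set Pt) ↔
      ∃ α β γ : ℝ, 0 ≤ α ∧ 0 ≤ β ∧ 0 ≤ γ ∧ α + β + γ = 1 ∧ α • a + β • b + γ • c = x := by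
  constructor
  · intro hx
    rw [convexHull_insert ⟨b, Set.mem_insert b _⟩, convexHull_pair, mem_convexJoin] at hx
    obtain ⟨p, hp, z, hz, hxz⟩ := hx
    rw [Set.mem_singleton_iff] at hp
    subst hp
    obtain ⟨p, q, hp, hq, hpq, rfl⟩ := hz
    obtain ⟨u, v, hu, hv, huv, rfl⟩ := hxz
    refine ⟨u, v * p, v * q, hu, mul_nonneg hv hp, mul_nonneg hv hq, by nlinarith, ?_⟩
    simp [smul_add, smul_smul, add_assoc]
  · rintro ⟨α, β, γ, hα, hβ, hγ, hsum, rfl⟩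
    have := (convex_convexHull ℝ ({a, b, c} : Set Pt)).sum_mem
      (t := Finset.univ) (w := ![α, β, γ]) (z := ![a, b, c])
      (by intro i _; fin_cases i <;> simpa)
      (by simp [Fin.sum_univ_three, hsum])
      (by intro i _; fin_cases i <;> · apply subset_convexHull; simp)
    simpa [Fin.sum_univ_three] using this

lemma key (K : Set Pt) (hK : IsCompact K) (hne : K.Nonempty) (a b c : Pt)
    (hind : ¬ Collinear ℝ ({a, b, c} : Set Pt))
    (hsub : K ⊆ convexHull ℝ ({a, b, c} : Set Pt))
    (hmin : ∀ a' b' c' : Pt, K ⊆ convexHull ℝ ({a', b', c'} : Set Pt) →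
      triArea a b c ≤ triArea a' b' c')
    (hdis : segment ℝ a b ∩ K = ∅) : False := by
  set D : ℝ := (b 0 - a 0) * (c 1 - a 1) - (b 1 - a 1) * (c 0 - a 0) with hD
  have hD0 : D ≠ 0 := fun h => hind (collinear_of_det a b c h)
  set g : Pt → ℝ := fun x => ((b 0 - a 0) * (x 1 - a 1) - (b 1 - a 1) * (x 0 - a 0)) / D with hg
  -- value of g at a barycentric combination
  have gval : ∀ α β γ : ℝ, α + β + γ = 1 → ∀ x : Pt, α • a + β • b + γ • c = x → g x = γ := by
    intro α β γ hsum x hx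
    have h0 : x 0 = α * a 0 + β * b 0 + γ * c 0 := by
      rw [← hx]; simp [PiLp.add_apply, PiLp.smul_apply]
    have h1 : x 1 = α * a 1 + β * b 1 + γ * c 1 := by
      rw [← hx]; simp [PiLp.add_apply, PiLp.smul_apply]
    have hα : α = 1 - β - γ := by linarith
    rw [hg]
    field_simp
    rw [h0, h1, hα, hD]
    ring
  have hgpos : ∀ x ∈ K, 0 < g x := by
    intro x hx
    obtain ⟨α, β, γ, hα, hβ, hγ, hsum, hcomb⟩ := mem_tri.mp (hsub hx)
    have hgx : g x = γ := gval α β γ hsum x hcomb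
    rcases lt_or_eq_of_le hγ with h | h
    · rw [hgx]; exact h
    · exfalso
      have hxseg : x ∈ segment ℝ a b := by
        refine ⟨α, β, hα, hβ, by linarith, ?_⟩
        rw [← hcomb, ← h]
        simp
      exact Set.eq_empty_iff_forall_notMem.mp hdis x ⟨hxseg, hx⟩
  have hcont : Continuous g := by
    apply Continuous.div_const
    apply Continuous.sub
    · exact (continuous_const.mul (((EuclideanSpace.proj (1 : Fin 2)).continuous).sub continuous_const))
    · exact (continuous_const.mul (((EuclideanSpace.proj (0 : Fin 2)).continuous).sub continuous_const))
  obtain ⟨x₀, hx₀K, hx₀min⟩ := hK.exists_isMinOn hne hcont.continuousOn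
  set t : ℝ := min (g x₀) (1/2) with ht
  have ht0 : 0 < t := lt_min (hgpos x₀ hx₀K) (by norm_num)
  have ht2 : t ≤ 1/2 := min_le_right _ _
  have ht1 : (1 : ℝ) - t ≠ 0 := by linarith
  have htle : ∀ x ∈ K, t ≤ g x := fun x hx => le_trans (min_le_left _ _) (hx₀min hx)
  set a' : Pt := a + t • (c - a) with ha'
  set b' : Pt := b + t • (c - b) with hb'
  have hsub' : K ⊆ convexHull ℝ ({a', b', c} : Set Pt) := by
    intro x hx
    obtain ⟨α, β, γ, hα, hβ, hγ, hsum, hcomb⟩ := mem_tri.mp (hsub hx)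
    have hγt : t ≤ γ := by
      have := htle x hx
      rwa [gval α β γ hsum x hcomb] at this
    have h1t : (0:ℝ) < 1 - t := by linarith
    obtain rfl : α = 1 - β - γ := by linarith
    refine mem_tri.mpr ⟨(1 - β - γ) / (1 - t), β / (1 - t), (γ - t) / (1 - t), ?_, ?_, ?_, ?_, ?_⟩
    · exact div_nonneg hα h1t.le
    · exact div_nonneg hβ h1t.le
    · exact div_nonneg (by linarith) h1t.le
    · field_simp; ring
    · rw [← hcomb]
      ext i
      simp only [PiLp.add_apply, PiLp.smul_apply, PiLp.sub_apply, smul_eq_mul, ha', hb']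
      field_simp
      ring
  have harea : triArea a' b' c = (1 - t)^2 * triArea a b c := by
    unfold triArea
    have hdet : det2 (b' - a') (c - a') = (1 - t)^2 * det2 (b - a) (c - a) := by
      simp only [det2, PiLp.sub_apply, PiLp.add_apply, PiLp.smul_apply, smul_eq_mul, ha', hb']
      ring
    rw [hdet, abs_mul, abs_of_nonneg (sq_nonneg _)]
    ring
  have hApos : 0 < triArea a b c := by
    unfold triArea
    have : det2 (b - a) (c - a) ≠ 0 := by
      simp only [det2, PiLp.sub_apply]
      exact hD0
    have := abs_pos.mpr this
    linarith
  have hle := hmin a' b' c hsub'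
  rw [harea] at hle
  nlinarith [mul_pos (mul_pos ht0 (show (0:ℝ) < 2 - t by linarith)) hApos]

theorem stmt_11 (K : Set Pt) (hK : IsCompact K) (hconv : Convex ℝ K)
    (hint : (interior K).Nonempty) (a b c : Pt)
    (hind : ¬ Collinear ℝ ({a, b, c} : Set Pt))
    (hsub : K ⊆ convexHull ℝ ({a, b, c} : Set Pt))
    (hmin : ∀ a' b' c' : Pt, K ⊆ convexHull ℝ ({a', b', c'} : Set Pt) →
      triArea a b c ≤ triArea a' b' c') :
    (segment ℝ a b ∩ K).Nonempty ∧ (segment ℝ b c ∩ K).Nonempty ∧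
    (segment ℝ c a ∩ K).Nonempty := by
  have hne : K.Nonempty := hint.mono interior_subset
  have hind2 : ¬ Collinear ℝ ({b, c, a} : Set Pt) := by rwa [set_cyc]
  have hind3 : ¬ Collinear ℝ ({c, a, b} : Set Pt) := by rw [← set_cyc b c a] at hind2; exact hind2
  have hsub2 : K ⊆ convexHull ℝ ({b, c, a} : Set Pt) := by rwa [set_cyc]
  have hsub3 : K ⊆ convexHull ℝ ({c, a, b} : Set Pt) := by rw [← set_cyc b c a] at hsub2; exact hsub2
  have hmin2 : ∀ a' b' c' : Pt, K ⊆ convexHull ℝ ({a', b', c'} : Set Pt) →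
      triArea b c a ≤ triArea a' b' c' := by
    intro a' b' c' h; rw [triArea_cyc]; exact hmin a' b' c' h
  have hmin3 : ∀ a' b' c' : Pt, K ⊆ convexHull ℝ ({a', b', c'} : Set Pt) →
      triArea c a b ≤ triArea a' b' c' := by
    intro a' b' c' h; rw [triArea_cyc, triArea_cyc]; exact hmin a' b' c' h
  refine ⟨?_, ?_, ?_⟩
  · by_contra h
    rw [Set.not_nonempty_iff_eq_empty] at h
    exact key K hK hne a b c hind hsub hmin h
  · by_contra h
    rw [Set.not_nonempty_iff_eq_empty] at h
    exact key K hK hne b c a hind2 hsub2 hmin2 h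
  · by_contra h
    rw [Set.not_nonempty_iff_eq_empty] at h
    exact key K hK hne c a b hind3 hsub3 hmin3 h
end
end

section
/- Let K ⊆ ℝ² be a compact convex set with nonempty interior and let T = conv{a, b, c} be a triangle of minimal area among all triangles containing K, with a, b, c affinely independent. Then the midpoint of each side of T belongs to K; in particular (b+c)/2 ∈ K, (c+a)/2 ∈ K, and (a+b)/2 ∈ K. -/
noncomputable section

namespace MidptAux

lemma apply_sub (u v : Pt) (i : Fin 2) : (u - v) i = u i - v i := rfl
lemma apply_smul (r : ℝ) (u : Pt) (i : Fin 2) : (r • u) i = r * u i := rfl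
lemma apply_add (u v : Pt) (i : Fin 2) : (u + v) i = u i + v i := rfl

lemma det2_smul_smul (s t : ℝ) (u v : Pt) : det2 (s•u) (t•v) = s*t*det2 u v := by
  simp [det2, apply_smul]; ring

lemma det2_combo_left (p q : ℝ) (u v : Pt) : det2 (p•u + q•v) v = p * det2 u v := by
  simp [det2, apply_smul, apply_add]; ring

lemma det2_combo_right (p q : ℝ) (u v : Pt) : det2 u (p•u + q•v) = q * det2 u v := by
  simp [det2, apply_smul, apply_add]; ring

lemma mem_hull3 {a b c : Pt} {α β γ : ℝ} (hα : 0 ≤ α) (hβ : 0 ≤ β) (hγ : 0 ≤ γ)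
    (h : α + β + γ = 1) :
    α•a + β•b + γ•c ∈ convexHull ℝ ({a,b,c} : Set Pt) := by
  have hmem : ∀ i : Fin 3, (![a,b,c]) i ∈ ({a,b,c} : Set Pt) := by
    intro i; fin_cases i <;> simp
  have := (convex_convexHull ℝ ({a,b,c} : Set Pt)).sum_mem
    (t := (Finset.univ : Finset (Fin 3))) (w := ![α,β,γ]) (z := ![a,b,c])
    (fun i _ => by fin_cases i <;> simpa)
    (by simp [Fin.sum_univ_three]; linarith)
    (fun i _ => subset_convexHull ℝ _ (hmem i))
  simpa [Fin.sum_univ_three] using this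

lemma hull3_subset (a b c : Pt) :
    convexHull ℝ ({a,b,c} : Set Pt) ⊆
      {x | ∃ α β γ : ℝ, 0 ≤ α ∧ 0 ≤ β ∧ 0 ≤ γ ∧ α + β + γ = 1 ∧ x = α•a + β•b + γ•c} := by
  apply convexHull_min
  · intro x hx
    rcases hx with rfl | rfl | rfl
    · exact ⟨1, 0, 0, by norm_num, by norm_num, by norm_num, by norm_num, by module⟩
    · exact ⟨0, 1, 0, by norm_num, by norm_num, by norm_num, by norm_num, by module⟩
    · exact ⟨0, 0, 1, by norm_num, by norm_num, by norm_num, by norm_num, by module⟩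
  · rintro x ⟨α1, β1, γ1, hα1, hβ1, hγ1, hs1, hx⟩ y ⟨α2, β2, γ2, hα2, hβ2, hγ2, hs2, hy⟩
      p q hp hq hpq
    refine ⟨p*α1 + q*α2, p*β1 + q*β2, p*γ1 + q*γ2, by positivity, by positivity, by positivity,
      by linear_combination p*hs1 + q*hs2 + hpq, ?_⟩
    rw [hx, hy]; module

lemma collinear_of_det2 {a b c : Pt} (h : det2 (b-a) (c-a) = 0) :
    Collinear ℝ ({a,b,c} : Set Pt) := by
  rcases eq_or_ne b a with hb | hb
  · subst hb
    have : ({b, b, c} : Set Pt) = {b, c} := by simp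
    rw [this]
    exact collinear_pair ℝ b c
  · rw [collinear_iff_of_mem (Set.mem_insert a ({b,c} : Set Pt))]
    refine ⟨b - a, ?_⟩
    have hu : b - a ≠ 0 := sub_ne_zero.mpr hb
    have hu' : (b-a) 0 ≠ 0 ∨ (b-a) 1 ≠ 0 := by
      by_contra hc
      push_neg at hc
      apply hu
      ext i
      fin_cases i
      · simpa using hc.1
      · simpa using hc.2
    intro p hp
    have hdet : (b-a) 0 * (c-a) 1 - (b-a) 1 * (c-a) 0 = 0 := h
    simp only [Set.mem_insert_iff, Set.mem_singleton_iff] at hp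
    simp only [vadd_eq_add]
    rcases hp with hpa | hpb | hpc
    · exact ⟨0, by rw [hpa]; module⟩
    · exact ⟨1, by rw [hpb]; module⟩
    · rw [hpc]
      rcases hu' with h0 | h1
      · refine ⟨(c-a) 0 / (b-a) 0, ?_⟩
        have hw : c - a = ((c-a) 0 / (b-a) 0) • (b - a) := by
          ext i
          fin_cases i
          · show (c-a) 0 = (c-a) 0 / (b-a) 0 * (b-a) 0
            rw [div_mul_cancel₀ _ h0]
          · show (c-a) 1 = (c-a) 0 / (b-a) 0 * (b-a) 1
            rw [div_mul_eq_mul_div, eq_div_iff h0]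
            linear_combination hdet
        rw [← hw]; abel
      · refine ⟨(c-a) 1 / (b-a) 1, ?_⟩
        have hw : c - a = ((c-a) 1 / (b-a) 1) • (b - a) := by
          ext i
          fin_cases i
          · show (c-a) 0 = (c-a) 1 / (b-a) 1 * (b-a) 0
            rw [div_mul_eq_mul_div, eq_div_iff h1]
            linear_combination -hdet
          · show (c-a) 1 = (c-a) 1 / (b-a) 1 * (b-a) 1
            rw [div_mul_cancel₀ _ h1]
        rw [← hw]; abel

lemma eps_pick {K : Set Pt} (hK : IsCompact K) (hne : K.Nonempty) {ψ θ : Pt → ℝ}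
    (hψ : Continuous ψ) (hθ : Continuous θ)
    (hψ0 : ∀ x ∈ K, 0 ≤ ψ x) (hθ1 : ∀ x ∈ K, θ x ≤ 1)
    (hkey : ∀ x ∈ K, ψ x = 0 → θ x < 0) :
    ∃ ε : ℝ, 0 < ε ∧ ε < 1 ∧ ∀ x ∈ K, ε * θ x + ε^2 ≤ ψ x := by
  obtain ⟨x₀, hx₀, hmin⟩ := hK.exists_isMinOn hne
    (Continuous.continuousOn (hψ.max hθ.neg))
  set δ : ℝ := max (ψ x₀) (-θ x₀) with hδdef
  have hδ : 0 < δ := by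
    rcases lt_or_eq_of_le (hψ0 x₀ hx₀) with h | h
    · exact lt_max_of_lt_left h
    · exact lt_max_of_lt_right (by linarith [hkey x₀ hx₀ h.symm])
  refine ⟨min (δ/2) (1/2), by positivity, by
      have := min_le_right (δ/2) (1/2); linarith, ?_⟩
  intro x hx
  set ε : ℝ := min (δ/2) (1/2)
  have hε0 : 0 < ε := by positivity
  have hε1 : ε ≤ 1/2 := min_le_right _ _
  have hεδ : ε ≤ δ/2 := min_le_left _ _
  have hmx : δ ≤ max (ψ x) (-θ x) := hmin hx
  rcases le_max_iff.mp hmx with h | h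
  · -- ψ x ≥ δ
    have h1 : θ x ≤ 1 := hθ1 x hx
    nlinarith
  · -- -θ x ≥ δ
    have h0 : 0 ≤ ψ x := hψ0 x hx
    nlinarith

lemma area_scale (a b c : Pt) {s t : ℝ} (hs : 0 ≤ s) (ht : 0 ≤ t) :
    triArea a (a + s•(b-a)) (a + t•(c-a)) = s * t * triArea a b c := by
  unfold triArea
  rw [add_sub_cancel_left, add_sub_cancel_left, det2_smul_smul, abs_mul,
    abs_of_nonneg (mul_nonneg hs ht)]
  ring

lemma shrink_subset {K : Set Pt} {a b c : Pt} {β γ : Pt → ℝ}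
    (hw : ∀ x ∈ K, 0 ≤ β x ∧ 0 ≤ γ x ∧ x = a + β x • (b-a) + γ x • (c-a))
    {s t : ℝ} (hs : 0 < s) (ht : 0 < t)
    (hcond : ∀ x ∈ K, β x * t + γ x * s ≤ s * t) :
    K ⊆ convexHull ℝ ({a, a + s•(b-a), a + t•(c-a)} : Set Pt) := by
  intro x hx
  obtain ⟨hb0, hg0, hrep⟩ := hw x hx
  have cond := hcond x hx
  have hl0 : 0 ≤ β x / s := div_nonneg hb0 hs.le
  have hm0 : 0 ≤ γ x / t := div_nonneg hg0 ht.le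
  have hsum : β x / s + γ x / t ≤ 1 := by
    rw [div_add_div _ _ hs.ne' ht.ne', div_le_one (by positivity)]
    linarith
  have h1 : β x / s * s = β x := div_mul_cancel₀ _ hs.ne'
  have h2 : γ x / t * t = γ x := div_mul_cancel₀ _ ht.ne'
  have hx' : x = (1 - β x / s - γ x / t)•a + (β x / s)•(a + s•(b-a)) + (γ x / t)•(a + t•(c-a)) := by
    conv_lhs => rw [hrep]
    match_scalars <;> field_simp <;> ring
  rw [hx']
  exact mem_hull3 (by linarith) hl0 hm0 (by ring)

lemma triArea_cycle (a b c : Pt) : triArea b c a = triArea a b c := by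
  unfold triArea
  congr 1
  congr 1
  simp only [det2, apply_sub]
  ring

lemma mid_mem (K : Set Pt) (hK : IsCompact K) (hconv : Convex ℝ K)
    (hne : K.Nonempty) (a b c : Pt)
    (hind : ¬ Collinear ℝ ({a, b, c} : Set Pt))
    (hsub : K ⊆ convexHull ℝ ({a, b, c} : Set Pt))
    (hmin : ∀ a' b' c' : Pt, K ⊆ convexHull ℝ ({a', b', c'} : Set Pt) →
      triArea a b c ≤ triArea a' b' c') :
    midpoint ℝ b c ∈ K := by
  have hD : det2 (b - a) (c - a) ≠ 0 := fun h => hind (collinear_of_det2 h)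
  set D := det2 (b - a) (c - a) with hDdef
  set β : Pt → ℝ := fun x => det2 (x - a) (c - a) / D with hβdef
  set γ : Pt → ℝ := fun x => det2 (b - a) (x - a) / D with hγdef
  have hw : ∀ x ∈ K, 0 ≤ β x ∧ 0 ≤ γ x ∧ β x + γ x ≤ 1 ∧
      x = a + β x • (b - a) + γ x • (c - a) := by
    intro x hx
    obtain ⟨α', β', γ', hα', hβ', hγ', hsum, hxeq⟩ := hull3_subset a b c (hsub hx)
    have hxa : x - a = β' • (b - a) + γ' • (c - a) := by
      rw [hxeq]
      have hα'' : α' = 1 - β' - γ' := by linarith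
      rw [hα'']; module
    have hbx : β x = β' := by
      simp only [hβdef]
      rw [hxa, det2_combo_left, ← hDdef, mul_div_assoc, div_self hD, mul_one]
    have hgx : γ x = γ' := by
      simp only [hγdef]
      rw [hxa, det2_combo_right, ← hDdef, mul_div_assoc, div_self hD, mul_one]
    refine ⟨hbx ▸ hβ', hgx ▸ hγ', by rw [hbx, hgx]; linarith, ?_⟩
    rw [hbx, hgx]
    have hre : a + β' • (b - a) + γ' • (c - a) = a + (x - a) := by rw [add_assoc, ← hxa]
    rw [hre]; abel
  have hβc : Continuous β := by
    simp only [hβdef]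
    apply Continuous.div_const
    have h0 : Continuous (fun x : Pt => x 0) := PiLp.continuous_apply 2 _ 0
    have h1 : Continuous (fun x : Pt => x 1) := PiLp.continuous_apply 2 _ 1
    simp only [det2, apply_sub]
    fun_prop
  have hγc : Continuous γ := by
    simp only [hγdef]
    apply Continuous.div_const
    have h0 : Continuous (fun x : Pt => x 0) := PiLp.continuous_apply 2 _ 0
    have h1 : Continuous (fun x : Pt => x 1) := PiLp.continuous_apply 2 _ 1
    simp only [det2, apply_sub]
    fun_prop
  by_contra hm
  obtain ⟨f, u, hfu, hum⟩ := geometric_hahn_banach_closed_point hconv hK.isClosed hm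
  have hfm : f (midpoint ℝ b c) = (f b + f c)/2 := by
    rw [midpoint_eq_smul_add, map_smul, map_add, smul_eq_mul]
    norm_num
    ring
  set d : ℝ := f b - f c with hddef
  have hCd : ∀ x ∈ K, β x + γ x = 1 → (β x - 1/2) * d < 0 := by
    intro x hx h1
    obtain ⟨hb0, hg0, hbg, hrep⟩ := hw x hx
    have hfx : f x = f a + β x * (f b - f a) + γ x * (f c - f a) := by
      conv_lhs => rw [hrep]
      simp only [map_add, map_smul, map_sub, smul_eq_mul]
    have h2 : f x < (f b + f c)/2 := hfm ▸ lt_trans (hfu x hx) hum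
    rw [hfx] at h2
    have hg : γ x = 1 - β x := by linarith
    rw [hg] at h2
    rw [hddef]
    nlinarith
  have harea : (0:ℝ) < triArea a b c := by
    have : triArea a b c = 1/2 * |D| := rfl
    rw [this]
    have := abs_pos.mpr hD
    positivity
  have hψ0 : ∀ x ∈ K, 0 ≤ 1 - (β x + γ x) := by
    intro x hx; have := (hw x hx).2.2.1; linarith
  have shrinkK : ∀ s t : ℝ, 0 < s → 0 < t → s * t < 1 →
      (∀ x ∈ K, β x * t + γ x * s ≤ s * t) → False := by
    intro s t hs ht hst hcond
    have hsubK : K ⊆ convexHull ℝ ({a, a + s•(b-a), a + t•(c-a)} : Set Pt) :=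
      shrink_subset (fun x hx => ⟨(hw x hx).1, (hw x hx).2.1, (hw x hx).2.2.2⟩) hs ht hcond
    have h := hmin a (a + s•(b-a)) (a + t•(c-a)) hsubK
    rw [area_scale a b c hs.le ht.le] at h
    nlinarith
  rcases le_or_gt 0 d with hd | hd
  · -- contact points have β < 1/2 : shrink the b-side
    obtain ⟨ε, hε0, hε1, hεK⟩ := eps_pick hK hne
      (ψ := fun x => 1 - (β x + γ x)) (θ := fun x => β x - γ x)
      (continuous_const.sub (hβc.add hγc)) (hβc.sub hγc) hψ0
      (fun x hx => by
        show β x - γ x ≤ 1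
        have h := (hw x hx).2.2.1
        have h1 := (hw x hx).2.1
        linarith)
      (fun x hx hz => by
        replace hz : 1 - (β x + γ x) = 0 := hz
        have h1 : β x + γ x = 1 := by linarith
        have h2 := hCd x hx h1
        have hβlt : β x < 1/2 := by nlinarith
        show β x - γ x < 0
        linarith)
    refine shrinkK (1 - ε) (1 + ε) (by linarith) (by linarith) (by nlinarith) ?_
    intro x hx
    have h : ε * (β x - γ x) + ε^2 ≤ 1 - (β x + γ x) := hεK x hx
    nlinarith
  · -- contact points have β > 1/2 : shrink the c-side
    obtain ⟨ε, hε0, hε1, hεK⟩ := eps_pick hK hne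
      (ψ := fun x => 1 - (β x + γ x)) (θ := fun x => γ x - β x)
      (continuous_const.sub (hβc.add hγc)) (hγc.sub hβc) hψ0
      (fun x hx => by
        show γ x - β x ≤ 1
        have h := (hw x hx).2.2.1
        have h1 := (hw x hx).1
        linarith)
      (fun x hx hz => by
        replace hz : 1 - (β x + γ x) = 0 := hz
        have h1 : β x + γ x = 1 := by linarith
        have h2 := hCd x hx h1
        have hβgt : 1/2 < β x := by nlinarith
        show γ x - β x < 0
        linarith)
    refine shrinkK (1 + ε) (1 - ε) (by linarith) (by linarith) (by nlinarith) ?_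
    intro x hx
    have h : ε * (γ x - β x) + ε^2 ≤ 1 - (β x + γ x) := hεK x hx
    nlinarith

lemma cycle_prep {K : Set Pt} (a b c : Pt)
    (hind : ¬ Collinear ℝ ({a, b, c} : Set Pt))
    (hsub : K ⊆ convexHull ℝ ({a, b, c} : Set Pt))
    (hmin : ∀ a' b' c' : Pt, K ⊆ convexHull ℝ ({a', b', c'} : Set Pt) →
      triArea a b c ≤ triArea a' b' c') :
    (¬ Collinear ℝ ({b, c, a} : Set Pt)) ∧ (K ⊆ convexHull ℝ ({b, c, a} : Set Pt)) ∧
      (∀ a' b' c' : Pt, K ⊆ convexHull ℝ ({a', b', c'} : Set Pt) →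
        triArea b c a ≤ triArea a' b' c') := by
  have hset : ({b, c, a} : Set Pt) = {a, b, c} := by
    ext x; simp; tauto
  exact ⟨by rwa [hset], by rwa [hset], fun a' b' c' h => by
    rw [triArea_cycle]; exact hmin a' b' c' h⟩

end MidptAux

open MidptAux in
theorem stmt_12 (K : Set Pt) (hK : IsCompact K) (hconv : Convex ℝ K)
    (hint : (interior K).Nonempty) (a b c : Pt)
    (hind : ¬ Collinear ℝ ({a, b, c} : Set Pt))
    (hsub : K ⊆ convexHull ℝ ({a, b, c} : Set Pt))
    (hmin : ∀ a' b' c' : Pt, K ⊆ convexHull ℝ ({a', b', c'} : Set Pt) →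
      triArea a b c ≤ triArea a' b' c') :
    midpoint ℝ b c ∈ K ∧ midpoint ℝ c a ∈ K ∧ midpoint ℝ a b ∈ K := by
  have hne : K.Nonempty := by
    obtain ⟨x, hx⟩ := hint
    exact ⟨x, interior_subset hx⟩
  obtain ⟨hind2, hsub2, hmin2⟩ := cycle_prep a b c hind hsub hmin
  obtain ⟨hind3, hsub3, hmin3⟩ := cycle_prep b c a hind2 hsub2 hmin2
  exact ⟨mid_mem K hK hconv hne a b c hind hsub hmin,
    mid_mem K hK hconv hne b c a hind2 hsub2 hmin2,
    mid_mem K hK hconv hne c a b hind3 hsub3 hmin3⟩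
end
end

section
/- Let K ⊆ ℝ² be a convex set and suppose triangle ABC has all corners in K and each corner stable (A maximizes distance to line BC among points of K on A's closed side of line BC, and similarly for B and C), with A, B, C affinely independent. Then K is contained in the triangle conv{a, b, c}, where a, b, c are the pairwise intersection points of the three lines through A, B, C parallel to the respectively opposite sides; moreover A, B, C are the midpoints of the sides of conv{a, b, c}, and area(conv{a,b,c}) = 4·area(ABC). -/
noncomputable section

lemma pt_add_apply (x y : Pt) (i : Fin 2) : (x + y) i = x i + y i := rfl
lemma pt_sub_apply (x y : Pt) (i : Fin 2) : (x - y) i = x i - y i := rfl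
lemma pt_smul_apply (r : ℝ) (x : Pt) (i : Fin 2) : (r • x) i = r * x i := rfl
lemma det2_comp (x y z w : Pt) :
    det2 (x - y) (z - w) = (x 0 - y 0)*(z 1 - w 1) - (x 1 - y 1)*(z 0 - w 0) := rfl
lemma pt_ext {x y : Pt} (h0 : x 0 = y 0) (h1 : x 1 = y 1) : x = y := by
  ext i; fin_cases i <;> assumption

lemma mem_line_iff (p B C : Pt) : p ∈ lineThrough B C ↔ ∃ r : ℝ, p = B + r • (C - B) := by
  have h : p = (p - B) +ᵥ B := by simp
  show p ∈ affineSpan ℝ ({B, C} : Set Pt) ↔ _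
  rw [h, vadd_left_mem_affineSpan_pair]
  simp only [vadd_eq_add, vsub_eq_sub, sub_add_cancel]
  constructor
  · rintro ⟨r, hr⟩; exact ⟨r, by rw [hr]; abel⟩
  · rintro ⟨r, hr⟩; exact ⟨r, by rw [hr]; abel⟩

lemma pt_dist_eq (x y : Pt) : dist x y = Real.sqrt ((x 0 - y 0)^2 + (x 1 - y 1)^2) := by
  rw [EuclideanSpace.dist_eq]; simp [Fin.sum_univ_two, Real.dist_eq, sq_abs]

lemma pt_norm_eq (x : Pt) : ‖x‖ = Real.sqrt ((x 0)^2 + (x 1)^2) := by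
  rw [EuclideanSpace.norm_eq]; simp [Fin.sum_univ_two, sq_abs]

lemma lagrange_ineq (u0 u1 x0 x1 : ℝ) :
    (u0*x1 - u1*x0)^2 ≤ (x0^2 + x1^2) * (u0^2 + u1^2) := by
  nlinarith [sq_nonneg (u0*x0 + u1*x1)]

set_option maxHeartbeats 1000000 in
lemma distLine_formula (X B C : Pt) (h : B ≠ C) :
    distLine X B C = |det2 (C - B) (X - B)| / ‖C - B‖ := by
  have hn : 0 < (C 0 - B 0)^2 + (C 1 - B 1)^2 := by
    rcases lt_or_eq_of_le (by positivity : (0:ℝ) ≤ (C 0 - B 0)^2 + (C 1 - B 1)^2) with h' | h'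
    · exact h'
    · exfalso; apply h; apply pt_ext <;> nlinarith [sq_nonneg (C 0 - B 0), sq_nonneg (C 1 - B 1)]
  have hnorm : ‖C - B‖ = Real.sqrt ((C 0 - B 0)^2 + (C 1 - B 1)^2) := by
    rw [pt_norm_eq]; simp [pt_sub_apply]
  have hnormpos : 0 < ‖C - B‖ := by rw [hnorm]; exact Real.sqrt_pos.mpr hn
  have hdet : det2 (C - B) (X - B) =
      (C 0 - B 0) * (X 1 - B 1) - (C 1 - B 1) * (X 0 - B 0) := rfl
  -- lower bound
  have key : ∀ P ∈ lineThrough B C, |det2 (C - B) (X - B)| / ‖C - B‖ ≤ dist X P := by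
    intro P hP
    obtain ⟨r, hr⟩ := (mem_line_iff P B C).mp hP
    have hP0 : P 0 = B 0 + r * (C 0 - B 0) := by rw [hr]; rfl
    have hP1 : P 1 = B 1 + r * (C 1 - B 1) := by rw [hr]; rfl
    rw [div_le_iff₀ hnormpos, pt_dist_eq, hnorm, hdet, ← Real.sqrt_mul (by positivity)]
    rw [← Real.sqrt_sq_eq_abs]
    apply Real.sqrt_le_sqrt
    rw [hP0, hP1]
    have hlag := lagrange_ineq (C 0 - B 0) (C 1 - B 1) (X 0 - (B 0 + r*(C 0 - B 0)))
      (X 1 - (B 1 + r*(C 1 - B 1)))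
    linarith [hlag]
  -- upper bound via foot of perpendicular
  set r0 : ℝ := ((X 0 - B 0)*(C 0 - B 0) + (X 1 - B 1)*(C 1 - B 1)) / ((C 0 - B 0)^2 + (C 1 - B 1)^2) with hr0
  have hP0mem : B + r0 • (C - B) ∈ lineThrough B C := (mem_line_iff _ B C).mpr ⟨r0, rfl⟩
  have hdist0 : dist X (B + r0 • (C - B)) = |det2 (C - B) (X - B)| / ‖C - B‖ := by
    rw [pt_dist_eq, hdet, eq_div_iff (ne_of_gt hnormpos), hnorm,
      ← Real.sqrt_mul (by positivity), ← Real.sqrt_sq_eq_abs]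
    congr 1
    have e0 : (B + r0 • (C - B)) 0 = B 0 + r0 * (C 0 - B 0) := rfl
    have e1 : (B + r0 • (C - B)) 1 = B 1 + r0 * (C 1 - B 1) := rfl
    rw [e0, e1, hr0]
    field_simp
    ring
  apply le_antisymm
  · calc Metric.infDist X (lineThrough B C) ≤ dist X (B + r0 • (C - B)) :=
          Metric.infDist_le_dist_of_mem hP0mem
      _ = _ := hdist0
  · by_contra hlt
    push_neg at hlt
    obtain ⟨y, hy, hylt⟩ :=
      (Metric.infDist_lt_iff ⟨B, (mem_line_iff B B C).mpr ⟨0, by simp⟩⟩).mp hlt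
    exact absurd hylt (not_lt.mpr (key y hy))

lemma collinear_of_det2 (A B C : Pt) (h : det2 (C - B) (A - B) = 0) :
    Collinear ℝ ({A, B, C} : Set Pt) := by
  rw [collinear_iff_of_mem (show B ∈ ({A, B, C} : Set Pt) by simp)]
  have hcomp : (C 0 - B 0) * (A 1 - B 1) - (C 1 - B 1) * (A 0 - B 0) = 0 := h
  by_cases h0 : C 0 - B 0 = 0
  · by_cases h1 : C 1 - B 1 = 0
    · -- C = B
      refine ⟨A - B, ?_⟩
      intro p hp
      rcases hp with hp | hp | hp
      · exact ⟨1, by rw [hp]; apply pt_ext <;> simp [vadd_eq_add, pt_add_apply, pt_sub_apply, pt_smul_apply]⟩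
      · exact ⟨0, by rw [hp]; apply pt_ext <;> simp [vadd_eq_add, pt_add_apply, pt_sub_apply, pt_smul_apply]⟩
      · refine ⟨0, ?_⟩; rw [hp]
        apply pt_ext <;> simp [vadd_eq_add, pt_add_apply, pt_sub_apply, pt_smul_apply] <;> linarith
    · -- use v = C - B, A - B = r • (C-B) with r = (A 1 - B 1)/(C 1 - B 1)
      refine ⟨C - B, ?_⟩
      intro p hp
      rcases hp with hp | hp | hp
      · refine ⟨(A 1 - B 1)/(C 1 - B 1), ?_⟩; rw [hp]
        apply pt_ext <;> simp [vadd_eq_add, pt_add_apply, pt_sub_apply, pt_smul_apply] <;>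
          field_simp <;> nlinarith [hcomp]
      · exact ⟨0, by rw [hp]; apply pt_ext <;> simp [vadd_eq_add, pt_add_apply, pt_sub_apply, pt_smul_apply]⟩
      · exact ⟨1, by rw [hp]; apply pt_ext <;> simp [vadd_eq_add, pt_add_apply, pt_sub_apply, pt_smul_apply]⟩
  · refine ⟨C - B, ?_⟩
    intro p hp
    rcases hp with hp | hp | hp
    · refine ⟨(A 0 - B 0)/(C 0 - B 0), ?_⟩; rw [hp]
      apply pt_ext <;> simp [vadd_eq_add, pt_add_apply, pt_sub_apply, pt_smul_apply] <;>
        field_simp <;> nlinarith [hcomp]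
    · exact ⟨0, by rw [hp]; apply pt_ext <;> simp [vadd_eq_add, pt_add_apply, pt_sub_apply, pt_smul_apply]⟩
    · exact ⟨1, by rw [hp]; apply pt_ext <;> simp [vadd_eq_add, pt_add_apply, pt_sub_apply, pt_smul_apply]⟩

lemma combo_mem_hull (a b c : Pt) (α β γ : ℝ) (hα : 0 ≤ α) (hβ : 0 ≤ β) (hγ : 0 ≤ γ)
    (hs : α + β + γ = 1) : α • a + β • b + γ • c ∈ convexHull ℝ ({a, b, c} : Set Pt) := by
  have hconv := convex_convexHull ℝ ({a, b, c} : Set Pt)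
  have hamem : a ∈ convexHull ℝ ({a, b, c} : Set Pt) := subset_convexHull ℝ _ (by simp)
  have hbmem : b ∈ convexHull ℝ ({a, b, c} : Set Pt) := subset_convexHull ℝ _ (by simp)
  have hcmem : c ∈ convexHull ℝ ({a, b, c} : Set Pt) := subset_convexHull ℝ _ (by simp)
  by_cases hβγ : β + γ = 0
  · have hβ0 : β = 0 := by linarith
    have hγ0 : γ = 0 := by linarith
    have hα1 : α = 1 := by linarith
    simpa [hβ0, hγ0, hα1] using hamem
  · have hpos : 0 < β + γ := lt_of_le_of_ne (by linarith) (Ne.symm hβγ)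
    have hz : (β/(β+γ)) • b + (γ/(β+γ)) • c ∈ convexHull ℝ ({a, b, c} : Set Pt) :=
      hconv hbmem hcmem (div_nonneg hβ hpos.le) (div_nonneg hγ hpos.le) (by field_simp)
    have hfin := hconv hamem hz hα hpos.le (by linarith)
    have heq : α • a + (β+γ) • ((β/(β+γ)) • b + (γ/(β+γ)) • c) = α • a + β • b + γ • c := by
      rw [smul_add, smul_smul, smul_smul, mul_div_cancel₀ _ hβγ, mul_div_cancel₀ _ hβγ, add_assoc]
    rwa [heq] at hfin
set_option maxHeartbeats 4000000 in
theorem stmt_18 (K : Set Pt) (hK : Convex ℝ K)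
    (A B C : Pt) (hA : A ∈ K) (hB : B ∈ K) (hC : C ∈ K)
    (hind : ¬ Collinear ℝ ({A, B, C} : Set Pt))
    (hstabA : ∀ X ∈ K, 0 ≤ det2 (C - B) (A - B) * det2 (C - B) (X - B) →
      distLine X B C ≤ distLine A B C)
    (hstabB : ∀ X ∈ K, 0 ≤ det2 (A - C) (B - C) * det2 (A - C) (X - C) →
      distLine X C A ≤ distLine B C A)
    (hstabC : ∀ X ∈ K, 0 ≤ det2 (B - A) (C - A) * det2 (B - A) (X - A) →
      distLine X A B ≤ distLine C A B)
    (a b c : Pt)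
    (ha : (∃ t : ℝ, a = B + t • (A - C)) ∧ (∃ t : ℝ, a = C + t • (B - A)))
    (hb : (∃ t : ℝ, b = C + t • (B - A)) ∧ (∃ t : ℝ, b = A + t • (C - B)))
    (hc : (∃ t : ℝ, c = A + t • (C - B)) ∧ (∃ t : ℝ, c = B + t • (A - C))) :
    K ⊆ convexHull ℝ ({a, b, c} : Set Pt) ∧
    A = midpoint ℝ b c ∧ B = midpoint ℝ c a ∧ C = midpoint ℝ a b ∧
    triArea a b c = 4 * triArea A B C := by
  have hd : det2 (C - B) (A - B) ≠ 0 := fun h => hind (collinear_of_det2 A B C h)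
  have hD : (C 0 - B 0)*(A 1 - B 1) - (C 1 - B 1)*(A 0 - B 0) ≠ 0 := hd
  have hBC : B ≠ C := by
    intro h; apply hD; rw [h]; ring
  have hCA : C ≠ A := by
    intro h; apply hD; rw [h]; ring
  have hAB : A ≠ B := by
    intro h; apply hD; rw [h]; ring
  -- components of a
  obtain ⟨⟨ta, hat⟩, ⟨sa, has⟩⟩ := ha
  have e10 : a 0 = B 0 + ta * (A 0 - C 0) := by rw [hat]; rfl
  have e11 : a 1 = B 1 + ta * (A 1 - C 1) := by rw [hat]; rfl
  have e20 : a 0 = C 0 + sa * (B 0 - A 0) := by rw [has]; rfl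
  have e21 : a 1 = C 1 + sa * (B 1 - A 1) := by rw [has]; rfl
  have hta : ((C 0 - B 0)*(A 1 - B 1) - (C 1 - B 1)*(A 0 - B 0)) * (ta + 1) = 0 := by
    linear_combination (A 1 - B 1) * e10 - (A 1 - B 1) * e20 - (A 0 - B 0) * e11 + (A 0 - B 0) * e21
  have hta' : ta = -1 := by
    rcases mul_eq_zero.mp hta with h | h
    · exact absurd h hD
    · linarith
  subst hta'
  have ha0 : a 0 = B 0 + C 0 - A 0 := by rw [e10]; ring
  have ha1 : a 1 = B 1 + C 1 - A 1 := by rw [e11]; ring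
  -- components of b
  obtain ⟨⟨tb, hbt⟩, ⟨sb, hbs⟩⟩ := hb
  have f10 : b 0 = C 0 + tb * (B 0 - A 0) := by rw [hbt]; rfl
  have f11 : b 1 = C 1 + tb * (B 1 - A 1) := by rw [hbt]; rfl
  have f20 : b 0 = A 0 + sb * (C 0 - B 0) := by rw [hbs]; rfl
  have f21 : b 1 = A 1 + sb * (C 1 - B 1) := by rw [hbs]; rfl
  have htb : ((C 0 - B 0)*(A 1 - B 1) - (C 1 - B 1)*(A 0 - B 0)) * (tb + 1) = 0 := by
    linear_combination (B 1 - C 1) * f10 - (B 1 - C 1) * f20 - (B 0 - C 0) * f11 + (B 0 - C 0) * f21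
  have htb' : tb = -1 := by
    rcases mul_eq_zero.mp htb with h | h
    · exact absurd h hD
    · linarith
  subst htb'
  have hb0 : b 0 = A 0 + C 0 - B 0 := by rw [f10]; ring
  have hb1 : b 1 = A 1 + C 1 - B 1 := by rw [f11]; ring
  -- components of c
  obtain ⟨⟨tc, hct⟩, ⟨sc, hcs⟩⟩ := hc
  have g10 : c 0 = A 0 + tc * (C 0 - B 0) := by rw [hct]; rfl
  have g11 : c 1 = A 1 + tc * (C 1 - B 1) := by rw [hct]; rfl
  have g20 : c 0 = B 0 + sc * (A 0 - C 0) := by rw [hcs]; rfl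
  have g21 : c 1 = B 1 + sc * (A 1 - C 1) := by rw [hcs]; rfl
  have htc : ((C 0 - B 0)*(A 1 - B 1) - (C 1 - B 1)*(A 0 - B 0)) * (tc + 1) = 0 := by
    linear_combination (C 1 - A 1) * g10 - (C 1 - A 1) * g20 - (C 0 - A 0) * g11 + (C 0 - A 0) * g21
  have htc' : tc = -1 := by
    rcases mul_eq_zero.mp htc with h | h
    · exact absurd h hD
    · linarith
  subst htc'
  have hc0 : c 0 = A 0 + B 0 - C 0 := by rw [g10]; ring
  have hc1 : c 1 = A 1 + B 1 - C 1 := by rw [g11]; ring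
  refine ⟨?_, ?_, ?_, ?_, ?_⟩
  · -- containment
    intro X hX
    have hnBC : 0 < ‖C - B‖ := norm_pos_iff.mpr (sub_ne_zero.mpr (Ne.symm hBC))
    have hnCA : 0 < ‖A - C‖ := norm_pos_iff.mpr (sub_ne_zero.mpr (Ne.symm hCA))
    have hnAB : 0 < ‖B - A‖ := norm_pos_iff.mpr (sub_ne_zero.mpr (Ne.symm hAB))
    have hboundA : det2 (C-B) (A-B) * det2 (C-B) (X-B) ≤ det2 (C-B) (A-B) ^ 2 := by
      by_cases hs : 0 ≤ det2 (C-B) (A-B) * det2 (C-B) (X-B)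
      · have h1 := hstabA X hX hs
        rw [distLine_formula X B C hBC, distLine_formula A B C hBC] at h1
        have h2 : |det2 (C-B) (X-B)| ≤ |det2 (C-B) (A-B)| :=
          (div_le_div_iff_of_pos_right hnBC).mp h1
        calc det2 (C-B) (A-B) * det2 (C-B) (X-B) ≤ |det2 (C-B) (A-B) * det2 (C-B) (X-B)| :=
              le_abs_self _
          _ = |det2 (C-B) (A-B)| * |det2 (C-B) (X-B)| := abs_mul _ _
          _ ≤ |det2 (C-B) (A-B)| * |det2 (C-B) (A-B)| :=
              mul_le_mul_of_nonneg_left h2 (abs_nonneg _)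
          _ = det2 (C-B) (A-B) ^ 2 := by rw [abs_mul_abs_self]; ring
      · push_neg at hs
        nlinarith [sq_nonneg (det2 (C-B) (A-B))]
    have hboundB : det2 (A-C) (B-C) * det2 (A-C) (X-C) ≤ det2 (A-C) (B-C) ^ 2 := by
      by_cases hs : 0 ≤ det2 (A-C) (B-C) * det2 (A-C) (X-C)
      · have h1 := hstabB X hX hs
        rw [distLine_formula X C A hCA, distLine_formula B C A hCA] at h1
        have h2 : |det2 (A-C) (X-C)| ≤ |det2 (A-C) (B-C)| :=
          (div_le_div_iff_of_pos_right hnCA).mp h1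
        calc det2 (A-C) (B-C) * det2 (A-C) (X-C) ≤ |det2 (A-C) (B-C) * det2 (A-C) (X-C)| :=
              le_abs_self _
          _ = |det2 (A-C) (B-C)| * |det2 (A-C) (X-C)| := abs_mul _ _
          _ ≤ |det2 (A-C) (B-C)| * |det2 (A-C) (B-C)| :=
              mul_le_mul_of_nonneg_left h2 (abs_nonneg _)
          _ = det2 (A-C) (B-C) ^ 2 := by rw [abs_mul_abs_self]; ring
      · push_neg at hs
        nlinarith [sq_nonneg (det2 (A-C) (B-C))]
    have hboundC : det2 (B-A) (C-A) * det2 (B-A) (X-A) ≤ det2 (B-A) (C-A) ^ 2 := by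
      by_cases hs : 0 ≤ det2 (B-A) (C-A) * det2 (B-A) (X-A)
      · have h1 := hstabC X hX hs
        rw [distLine_formula X A B hAB, distLine_formula C A B hAB] at h1
        have h2 : |det2 (B-A) (X-A)| ≤ |det2 (B-A) (C-A)| :=
          (div_le_div_iff_of_pos_right hnAB).mp h1
        calc det2 (B-A) (C-A) * det2 (B-A) (X-A) ≤ |det2 (B-A) (C-A) * det2 (B-A) (X-A)| :=
              le_abs_self _
          _ = |det2 (B-A) (C-A)| * |det2 (B-A) (X-A)| := abs_mul _ _
          _ ≤ |det2 (B-A) (C-A)| * |det2 (B-A) (C-A)| :=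
              mul_le_mul_of_nonneg_left h2 (abs_nonneg _)
          _ = det2 (B-A) (C-A) ^ 2 := by rw [abs_mul_abs_self]; ring
      · push_neg at hs
        nlinarith [sq_nonneg (det2 (B-A) (C-A))]
    -- convert all to the common denominator D = det2 (C-B) (A-B)
    have HA : det2 (C-B) (A-B) * det2 (C-B) (X-B) ≤ det2 (C-B) (A-B) ^ 2 := hboundA
    have HB : det2 (C-B) (A-B) * det2 (A-C) (X-C) ≤ det2 (C-B) (A-B) ^ 2 := by
      have h1 : det2 (A-C) (B-C) = det2 (C-B) (A-B) := by
        simp only [det2, pt_sub_apply]; ring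
      rw [h1] at hboundB; exact hboundB
    have HC : det2 (C-B) (A-B) * det2 (B-A) (X-A) ≤ det2 (C-B) (A-B) ^ 2 := by
      have h1 : det2 (B-A) (C-A) = det2 (C-B) (A-B) := by
        simp only [det2, pt_sub_apply]; ring
      rw [h1] at hboundC; exact hboundC
    have hsqpos : 0 < det2 (C-B) (A-B) ^ 2 :=
      lt_of_le_of_ne (sq_nonneg _) (Ne.symm (pow_ne_zero 2 hd))
    have key : ∀ p : ℝ, det2 (C-B) (A-B) * p ≤ det2 (C-B) (A-B) ^ 2 →
        p / det2 (C-B) (A-B) ≤ 1 := by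
      intro p hp
      have h1 : p / det2 (C-B) (A-B) = (det2 (C-B) (A-B) * p) / det2 (C-B) (A-B) ^ 2 := by
        field_simp
      rw [h1, div_le_one hsqpos]
      exact hp
    have kA := key _ HA
    have kB := key _ HB
    have kC := key _ HC
    have hsum : det2 (C-B) (X-B) / det2 (C-B) (A-B) + det2 (A-C) (X-C) / det2 (C-B) (A-B)
        + det2 (B-A) (X-A) / det2 (C-B) (A-B) = 1 := by
      rw [← add_div, ← add_div,
        show det2 (C-B) (X-B) + det2 (A-C) (X-C) + det2 (B-A) (X-A) = det2 (C-B) (A-B) from by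
          simp only [det2, pt_sub_apply]; ring,
        div_self hd]
    have hXrep : X = ((1 - det2 (C-B) (X-B) / det2 (C-B) (A-B))/2) • a
        + ((1 - det2 (A-C) (X-C) / det2 (C-B) (A-B))/2) • b
        + ((1 - det2 (B-A) (X-A) / det2 (C-B) (A-B))/2) • c := by
      apply pt_ext <;>
        simp only [pt_add_apply, pt_smul_apply, ha0, ha1, hb0, hb1, hc0, hc1, det2,
          pt_sub_apply] <;>
        field_simp <;> ring
    rw [hXrep]
    exact combo_mem_hull a b c _ _ _ (by linarith) (by linarith) (by linarith) (by linarith)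
  · apply pt_ext <;>
      · rw [midpoint_eq_smul_add]
        simp only [pt_add_apply, pt_smul_apply, hb0, hb1, hc0, hc1, invOf_eq_inv]
        push_cast
        ring
  · apply pt_ext <;>
      · rw [midpoint_eq_smul_add]
        simp only [pt_add_apply, pt_smul_apply, ha0, ha1, hc0, hc1, invOf_eq_inv]
        push_cast
        ring
  · apply pt_ext <;>
      · rw [midpoint_eq_smul_add]
        simp only [pt_add_apply, pt_smul_apply, ha0, ha1, hb0, hb1, invOf_eq_inv]
        push_cast
        ring
  · have h1 : det2 (b - a) (c - a) = 4 * det2 (B - A) (C - A) := by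
      simp only [det2, pt_sub_apply, ha0, ha1, hb0, hb1, hc0, hc1]; ring
    rw [triArea, triArea, h1, abs_mul]
    rw [abs_of_nonneg (by norm_num : (0:ℝ) ≤ 4)]
    ring
end
end
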